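/- Suppose F is locally Lipschitzian at x̄ and WMax(F(x̄),K) ≠ ∅. Then the scalarizing functional f_{u,x̄} is locally Lipschitzian at x̄, i.e., there is a neighborhood of x̄ on which f_{u,x̄} is finite and Lipschitzian. -/

import Mathlib

open Set Topology Metric Pointwise

/-- The Gerstewitz (Tammer) scalarizing functional `Ψ_e(y) = inf {t : y ∈ t•e - K}`. -/
noncomputable def psiE {Y : Type*} [NormedAddCommGroup Y] [NormedSpace ℝ Y]
    (K : Set Y) (e : Y) (y : Y) : ℝ :=
  sInf {t : ℝ | t • e - y ∈ K}

/-- The lower inner function `g_l(x,z) = inf_{y ∈ F x} Ψ_e (y - z)` (with values in `EReal`). -/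
noncomputable def glow {X Y : Type*} [NormedAddCommGroup X] [NormedSpace ℝ X]
    [NormedAddCommGroup Y] [NormedSpace ℝ Y]
    (K : Set Y) (e : Y) (F : X → Set Y) (x : X) (z : Y) : EReal :=
  ⨅ y ∈ F x, (psiE K e (y - z) : EReal)

/-- The upper inner function `g_{u,x̄}(y) = inf_{ȳ ∈ F x̄} Ψ_e (y - ȳ)`. -/
noncomputable def gupp {X Y : Type*} [NormedAddCommGroup X] [NormedSpace ℝ X]
    [NormedAddCommGroup Y] [NormedSpace ℝ Y]
    (K : Set Y) (e : Y) (F : X → Set Y) (xbar : X) (y : Y) : EReal :=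
  ⨅ yb ∈ F xbar, (psiE K e (y - yb) : EReal)

/-- The lower scalarizing functional `f_{l,x̄}(x) = sup_{ȳ ∈ F x̄} g_l(x, ȳ)`. -/
noncomputable def flow {X Y : Type*} [NormedAddCommGroup X] [NormedSpace ℝ X]
    [NormedAddCommGroup Y] [NormedSpace ℝ Y]
    (K : Set Y) (e : Y) (F : X → Set Y) (xbar : X) (x : X) : EReal :=
  ⨆ yb ∈ F xbar, glow K e F x yb

/-- The upper scalarizing functional `f_{u,x̄}(x) = sup_{y ∈ F x} g_{u,x̄}(y)`. -/
noncomputable def fupp {X Y : Type*} [NormedAddCommGroup X] [NormedSpace ℝ X]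
    [NormedAddCommGroup Y] [NormedSpace ℝ Y]
    (K : Set Y) (e : Y) (F : X → Set Y) (xbar : X) (x : X) : EReal :=
  ⨆ y ∈ F x, gupp K e F xbar y

/-- Weakly minimal elements: `WMin(A,K) = {a ∈ A : (a - int K) ∩ A = ∅}`. -/
def wMinSet {Y : Type*} [NormedAddCommGroup Y] (A K : Set Y) : Set Y :=
  {a ∈ A | ∀ b ∈ A, a - b ∉ interior K}

/-- Weakly maximal elements: `WMax(A,K) = {a ∈ A : (a + int K) ∩ A = ∅}`. -/
def wMaxSet {Y : Type*} [NormedAddCommGroup Y] (A K : Set Y) : Set Y :=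
  {a ∈ A | ∀ b ∈ A, b - a ∉ interior K}

/-- Minimal elements: `Min(A,K) = {a ∈ A : (a - K) ∩ A = {a}}`. -/
def minSet {Y : Type*} [AddGroup Y] (A K : Set Y) : Set Y :=
  {a ∈ A | ∀ b ∈ A, a - b ∈ K → b = a}

/-!
With `closedBall e r ⊆ K`, the Gerstewitz functional `Ψ_e` is `r⁻¹`-Lipschitz, and it is
nonnegative at every `w` with `-w ∉ int K`. A weakly maximal `y₀ ∈ F x̄` has `yb - y₀ ∉ int K`
for all `yb ∈ F x̄`, so `g(y) = inf_{yb ∈ F x̄} Ψ_e(y - yb)` is finite (bounded below by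
`-‖y - y₀‖ / r`) and again `r⁻¹`-Lipschitz, with `g ≤ Ψ_e 0 = 0` on `F x̄`. Taking the supremum
of a Lipschitz function over the values of a Lipschitz set-valued map gives a Lipschitz function
of `x`, with constant `ℓ / r`.
-/

section Gerstewitz

variable {Y : Type*} [NormedAddCommGroup Y] [NormedSpace ℝ Y] {K : Set Y} {e : Y} {r : ℝ}

lemma add_mem_of_convex_of_smul_mem (hKcv : Convex ℝ K)
    (hKcone : ∀ t : ℝ, 0 ≤ t → ∀ y ∈ K, t • y ∈ K) {a b : Y} (ha : a ∈ K) (hb : b ∈ K) :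
    a + b ∈ K := by
  have hmid := hKcv ha hb (by norm_num : (0 : ℝ) ≤ 1 / 2) (by norm_num : (0 : ℝ) ≤ 1 / 2)
    (by norm_num)
  convert hKcone 2 (by norm_num) _ hmid using 1
  module

lemma mem_of_norm_sub_smul_le (hr : 0 < r) (hball : closedBall e r ⊆ K)
    (hKcone : ∀ t : ℝ, 0 ≤ t → ∀ y ∈ K, t • y ∈ K) {t : ℝ} (ht : 0 ≤ t) {z : Y}
    (hz : ‖z - t • e‖ ≤ t * r) : z ∈ K := by
  rcases ht.eq_or_lt with rfl | ht
  · obtain rfl : z = 0 := by simpa using hz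
    simpa using hKcone 0 le_rfl e (hball (mem_closedBall_self hr.le))
  · have hzt : t⁻¹ • z ∈ closedBall e r := by
      rw [mem_closedBall, dist_eq_norm, show t⁻¹ • z - e = t⁻¹ • (z - t • e) by
        rw [smul_sub, smul_smul, inv_mul_cancel₀ ht.ne', one_smul], norm_smul, norm_inv,
        Real.norm_of_nonneg ht.le, inv_mul_le_iff₀ ht]
      exact hz
    simpa [smul_smul, ht.ne'] using hKcone t ht.le _ (hball hzt)

lemma neg_mem_interior_of_smul_sub_mem (hr : 0 < r) (hball : closedBall e r ⊆ K)
    (hKcv : Convex ℝ K) (hKcone : ∀ t : ℝ, 0 ≤ t → ∀ y ∈ K, t • y ∈ K) {t : ℝ} (ht : t < 0)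
    {y : Y} (hy : t • e - y ∈ K) : -y ∈ interior K := by
  -- `-y = (t • e - y) + (-t) • e`, and the ball of radius `-t * r` about `(-t) • e` lies in `K`.
  refine mem_interior_iff_mem_nhds.mpr (Filter.mem_of_superset (closedBall_mem_nhds _
    (mul_pos (neg_pos.mpr ht) hr)) fun z hz => ?_)
  have hrest : z - t • e + y ∈ K := by
    refine mem_of_norm_sub_smul_le hr hball hKcone (neg_nonneg.mpr ht.le) ?_
    rw [mem_closedBall, dist_eq_norm, sub_neg_eq_add] at hz
    rwa [show z - t • e + y - (-t) • e = z + y by module]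
  simpa using add_mem_of_convex_of_smul_mem hKcv hKcone hy hrest

lemma smul_sub_mem_add_of_smul_sub_mem (hr : 0 < r) (hball : closedBall e r ⊆ K)
    (hKcv : Convex ℝ K) (hKcone : ∀ t : ℝ, 0 ≤ t → ∀ y ∈ K, t • y ∈ K) {a b : Y} {t : ℝ}
    (ht : t • e - b ∈ K) : (t + r⁻¹ * ‖a - b‖) • e - a ∈ K := by
  have hab : (r⁻¹ * ‖a - b‖) • e - (a - b) ∈ K := by
    refine mem_of_norm_sub_smul_le (t := r⁻¹ * ‖a - b‖) hr hball hKcone (by positivity) ?_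
    rw [sub_sub_cancel_left, norm_neg]
    field_simp
    rfl
  simpa [show (t + r⁻¹ * ‖a - b‖) • e - a = (t • e - b) + ((r⁻¹ * ‖a - b‖) • e - (a - b)) by
    module] using add_mem_of_convex_of_smul_mem hKcv hKcone ht hab

lemma psiE_set_nonempty (hr : 0 < r) (hball : closedBall e r ⊆ K)
    (hKcone : ∀ t : ℝ, 0 ≤ t → ∀ y ∈ K, t • y ∈ K) (y : Y) :
    {t : ℝ | t • e - y ∈ K}.Nonempty :=
  ⟨r⁻¹ * ‖y‖, mem_of_norm_sub_smul_le (t := r⁻¹ * ‖y‖) hr hball hKcone (by positivity) (by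
    rw [sub_sub_cancel_left, norm_neg]; field_simp; rfl)⟩

lemma nonneg_of_smul_sub_mem (hr : 0 < r) (hball : closedBall e r ⊆ K) (hKcv : Convex ℝ K)
    (hKcone : ∀ t : ℝ, 0 ≤ t → ∀ y ∈ K, t • y ∈ K) {w : Y} (hw : -w ∉ interior K) {t : ℝ}
    (ht : t • e - w ∈ K) : 0 ≤ t :=
  not_lt.mp fun hneg => hw (neg_mem_interior_of_smul_sub_mem hr hball hKcv hKcone hneg ht)

lemma bddBelow_psiE_set (hr : 0 < r) (hball : closedBall e r ⊆ K) (hKcv : Convex ℝ K)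
    (hKcone : ∀ t : ℝ, 0 ≤ t → ∀ y ∈ K, t • y ∈ K) (h0 : (0 : Y) ∉ interior K) (y : Y) :
    BddBelow {t : ℝ | t • e - y ∈ K} := by
  refine ⟨-(r⁻¹ * ‖y‖), fun t ht => ?_⟩
  have h := smul_sub_mem_add_of_smul_sub_mem (a := 0) hr hball hKcv hKcone ht
  rw [sub_zero, zero_sub, norm_neg] at h
  have := nonneg_of_smul_sub_mem (w := 0) hr hball hKcv hKcone (by rwa [neg_zero])
    (by rwa [sub_zero])
  linarith

lemma psiE_le_psiE_add (hr : 0 < r) (hball : closedBall e r ⊆ K) (hKcv : Convex ℝ K)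
    (hKcone : ∀ t : ℝ, 0 ≤ t → ∀ y ∈ K, t • y ∈ K) (h0 : (0 : Y) ∉ interior K) (a b : Y) :
    psiE K e a ≤ psiE K e b + r⁻¹ * ‖a - b‖ := by
  rw [← sub_le_iff_le_add]
  refine le_csInf (psiE_set_nonempty hr hball hKcone b) fun t ht => sub_le_iff_le_add.mpr ?_
  exact csInf_le (bddBelow_psiE_set hr hball hKcv hKcone h0 a)
    (smul_sub_mem_add_of_smul_sub_mem hr hball hKcv hKcone ht)

lemma psiE_nonneg (hr : 0 < r) (hball : closedBall e r ⊆ K) (hKcv : Convex ℝ K)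
    (hKcone : ∀ t : ℝ, 0 ≤ t → ∀ y ∈ K, t • y ∈ K) {w : Y} (hw : -w ∉ interior K) :
    0 ≤ psiE K e w :=
  le_csInf (psiE_set_nonempty hr hball hKcone w) fun _ =>
    nonneg_of_smul_sub_mem hr hball hKcv hKcone hw

lemma psiE_zero (hr : 0 < r) (hball : closedBall e r ⊆ K) (hKcv : Convex ℝ K)
    (hKcone : ∀ t : ℝ, 0 ≤ t → ∀ y ∈ K, t • y ∈ K) (h0 : (0 : Y) ∉ interior K) :
    psiE K e 0 = 0 := by
  refine le_antisymm (csInf_le (bddBelow_psiE_set hr hball hKcv hKcone h0 0) ?_)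
    (psiE_nonneg hr hball hKcv hKcone (by simpa using h0))
  simpa using hKcone 0 le_rfl e (hball (mem_closedBall_self hr.le))

end Gerstewitz

section Infimum

variable {Y : Type*} [NormedAddCommGroup Y] [NormedSpace ℝ Y] {K : Set Y} {e : Y} {r : ℝ}

/-- Real-valued form of `gupp K e F x̄`, with `A = F x̄`. -/
noncomputable def psiInf (K : Set Y) (e : Y) (A : Set Y) (y : Y) : ℝ :=
  sInf ((fun a => psiE K e (y - a)) '' A)

lemma bddBelow_psiE_sub_image (hr : 0 < r) (hball : closedBall e r ⊆ K) (hKcv : Convex ℝ K)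
    (hKcone : ∀ t : ℝ, 0 ≤ t → ∀ y ∈ K, t • y ∈ K) {A : Set Y} {y₀ : Y}
    (hy₀ : y₀ ∈ wMaxSet A K) (y : Y) : BddBelow ((fun a => psiE K e (y - a)) '' A) := by
  have h0 : (0 : Y) ∉ interior K := by simpa using hy₀.2 y₀ hy₀.1
  refine ⟨-(r⁻¹ * ‖y - y₀‖), ?_⟩
  rintro _ ⟨a, ha, rfl⟩
  have hlip := psiE_le_psiE_add hr hball hKcv hKcone h0 (y₀ - a) (y - a)
  have hnonneg := psiE_nonneg (w := y₀ - a) hr hball hKcv hKcone (by simpa using hy₀.2 a ha)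
  rw [sub_sub_sub_cancel_right, norm_sub_rev] at hlip
  dsimp only
  linarith

lemma psiInf_le_psiInf_add (hr : 0 < r) (hball : closedBall e r ⊆ K) (hKcv : Convex ℝ K)
    (hKcone : ∀ t : ℝ, 0 ≤ t → ∀ y ∈ K, t • y ∈ K) {A : Set Y} {y₀ : Y}
    (hy₀ : y₀ ∈ wMaxSet A K) (a b : Y) :
    psiInf K e A a ≤ psiInf K e A b + r⁻¹ * ‖a - b‖ := by
  have h0 : (0 : Y) ∉ interior K := by simpa using hy₀.2 y₀ hy₀.1
  rw [← sub_le_iff_le_add]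
  refine le_csInf (Set.Nonempty.image _ ⟨y₀, hy₀.1⟩) ?_
  rintro _ ⟨c, hc, rfl⟩
  rw [sub_le_iff_le_add]
  calc psiInf K e A a ≤ psiE K e (a - c) :=
        csInf_le (bddBelow_psiE_sub_image hr hball hKcv hKcone hy₀ a) ⟨c, hc, rfl⟩
    _ ≤ psiE K e (b - c) + r⁻¹ * ‖a - b‖ := by
        simpa only [sub_sub_sub_cancel_right] using
          psiE_le_psiE_add hr hball hKcv hKcone h0 (a - c) (b - c)

lemma psiInf_nonpos (hr : 0 < r) (hball : closedBall e r ⊆ K) (hKcv : Convex ℝ K)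
    (hKcone : ∀ t : ℝ, 0 ≤ t → ∀ y ∈ K, t • y ∈ K) {A : Set Y} {y₀ : Y}
    (hy₀ : y₀ ∈ wMaxSet A K) {y : Y} (hy : y ∈ A) : psiInf K e A y ≤ 0 := by
  have h0 : (0 : Y) ∉ interior K := by simpa using hy₀.2 y₀ hy₀.1
  calc psiInf K e A y ≤ psiE K e (y - y) :=
        csInf_le (bddBelow_psiE_sub_image hr hball hKcv hKcone hy₀ y) ⟨y, hy, rfl⟩
    _ = 0 := by rw [sub_self, psiE_zero hr hball hKcv hKcone h0]

end Infimum

lemma EReal.biInf_coe_eq_coe_csInf {ι : Type*} {s : Set ι} {φ : ι → ℝ} (hs : s.Nonempty)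
    (hφ : BddBelow (φ '' s)) : ⨅ i ∈ s, (φ i : EReal) = ↑(sInf (φ '' s)) := by
  rw [EReal.coe_strictMono.monotone.map_csInf_of_continuousAt
    continuous_coe_real_ereal.continuousAt (hs.image φ) hφ, Set.image_image, sInf_image]

lemma EReal.biSup_coe_eq_coe_csSup {ι : Type*} {s : Set ι} {φ : ι → ℝ} (hs : s.Nonempty)
    (hφ : BddAbove (φ '' s)) : ⨆ i ∈ s, (φ i : EReal) = ↑(sSup (φ '' s)) := by
  rw [EReal.coe_strictMono.monotone.map_csSup_of_continuousAt
    continuous_coe_real_ereal.continuousAt (hs.image φ) hφ, Set.image_image, sSup_image]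

section Hausdorff

variable {E : Type*} [SeminormedAddCommGroup E] {g : E → ℝ} {L δ : ℝ} {A B : Set E}

lemma le_add_of_subset_add_closedBall (hL : 0 ≤ L) (hg : ∀ a b, g a ≤ g b + L * ‖a - b‖)
    (hAB : A ⊆ B + closedBall 0 δ) {M : ℝ} (hB : ∀ b ∈ B, g b ≤ M) {a : E} (ha : a ∈ A) :
    g a ≤ M + L * δ := by
  obtain ⟨b, hb, v, hv, rfl⟩ := hAB ha
  calc g (b + v) ≤ g b + L * ‖b + v - b‖ := hg _ _
    _ ≤ M + L * δ := by
        rw [add_sub_cancel_left]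
        gcongr
        · exact hB b hb
        · exact mem_closedBall_zero_iff.mp hv

lemma csSup_image_le_add_of_subset_add_closedBall (hL : 0 ≤ L)
    (hg : ∀ a b, g a ≤ g b + L * ‖a - b‖) (hAB : A ⊆ B + closedBall 0 δ) (hA : A.Nonempty)
    (hB : BddAbove (g '' B)) : sSup (g '' A) ≤ sSup (g '' B) + L * δ :=
  csSup_le (hA.image g) <| forall_mem_image.2 fun _ =>
    le_add_of_subset_add_closedBall hL hg hAB fun _ hb => le_csSup hB (mem_image_of_mem g hb)

lemma abs_csSup_image_sub_le {X : Type*} [SeminormedAddCommGroup X] (hL : 0 ≤ L)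
    (hg : ∀ a b, g a ≤ g b + L * ‖a - b‖) {F : X → Set E} {U : Set X} {ℓ : ℝ}
    (hF : ∀ x ∈ U, ∀ x' ∈ U, F x ⊆ F x' + closedBall 0 (ℓ * ‖x - x'‖))
    (hne : ∀ x ∈ U, (F x).Nonempty) (hbdd : ∀ x ∈ U, BddAbove (g '' F x))
    {x x' : X} (hx : x ∈ U) (hx' : x' ∈ U) :
    |sSup (g '' F x) - sSup (g '' F x')| ≤ L * ℓ * ‖x - x'‖ := by
  rw [abs_sub_le_iff, mul_assoc, sub_le_iff_le_add', sub_le_iff_le_add']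
  constructor
  · exact csSup_image_le_add_of_subset_add_closedBall hL hg (hF x hx x' hx') (hne x hx)
      (hbdd x' hx')
  · rw [norm_sub_rev]
    exact csSup_image_le_add_of_subset_add_closedBall hL hg (hF x' hx' x hx) (hne x' hx')
      (hbdd x hx)

end Hausdorff

theorem stmt12_general
    {X Y : Type*} [NormedAddCommGroup X] [NormedSpace ℝ X]
    [NormedAddCommGroup Y] [NormedSpace ℝ Y]
    (K : Set Y) (e : Y) (F : X → Set Y) (xbar : X)
    (hKcv : Convex ℝ K)
    (hKcone : ∀ t : ℝ, 0 ≤ t → ∀ y ∈ K, t • y ∈ K)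
    (he : e ∈ interior K)
    (hFlip : ∃ U ∈ 𝓝 xbar, ∃ ℓ : ℝ, 0 ≤ ℓ ∧
      ∀ x ∈ U, ∀ x' ∈ U, F x ⊆ F x' + Metric.closedBall (0 : Y) (ℓ * ‖x - x'‖))
    (hW : (wMaxSet (F xbar) K).Nonempty) :
    ∃ V ∈ 𝓝 xbar, ∃ c : ℝ,
      (∀ x ∈ V, fupp K e F xbar x ≠ ⊥ ∧ fupp K e F xbar x ≠ ⊤) ∧
      (∀ x ∈ V, ∀ x' ∈ V,
        |(fupp K e F xbar x).toReal - (fupp K e F xbar x').toReal| ≤ c * ‖x - x'‖) := by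
  obtain ⟨y₀, hy₀⟩ := hW
  obtain ⟨U, hU, ℓ, hℓ, hFU⟩ := hFlip
  obtain ⟨r, hr, hball⟩ := nhds_basis_closedBall.mem_iff.mp (mem_interior_iff_mem_nhds.mp he)
  set g := psiInf K e (F xbar)
  have hg : ∀ a b, g a ≤ g b + r⁻¹ * ‖a - b‖ := psiInf_le_psiInf_add hr hball hKcv hKcone hy₀
  have hxbar : xbar ∈ U := mem_of_mem_nhds hU
  have hne : ∀ x ∈ U, (F x).Nonempty := fun x hx =>
    Set.Nonempty.of_add_left ⟨y₀, hFU xbar hxbar x hx hy₀.1⟩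
  have hbdd : ∀ x ∈ U, BddAbove (g '' F x) := fun x hx =>
    ⟨0 + r⁻¹ * (ℓ * ‖x - xbar‖), forall_mem_image.2 fun _ =>
      le_add_of_subset_add_closedBall (by positivity) hg (hFU x hx xbar hxbar)
        fun _ => psiInf_nonpos hr hball hKcv hKcone hy₀⟩
  have hgupp : ∀ y, gupp K e F xbar y = g y := fun y =>
    EReal.biInf_coe_eq_coe_csInf ⟨y₀, hy₀.1⟩ (bddBelow_psiE_sub_image hr hball hKcv hKcone hy₀ y)
  have hf : ∀ x ∈ U, fupp K e F xbar x = sSup (g '' F x) := fun x hx => by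
    simp only [fupp, hgupp]
    exact EReal.biSup_coe_eq_coe_csSup (hne x hx) (hbdd x hx)
  refine ⟨U, hU, r⁻¹ * ℓ, fun x hx => by simp [hf x hx], fun x hx x' hx' => ?_⟩
  rw [hf x hx, hf x' hx', EReal.toReal_coe, EReal.toReal_coe]
  exact abs_csSup_image_sub_le (by positivity) hg hFU hne hbdd hx hx'

/-- if F is locally Lipschitz at x̄ and WMax(F(x̄),K) ≠ ∅, then f_{u,x̄} is
locally Lipschitz at x̄ (finite and Lipschitz on some neighborhood of x̄). -/
theorem stmt12
    {X Y : Type*} [NormedAddCommGroup X] [NormedSpace ℝ X] [CompleteSpace X]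
    [NormedAddCommGroup Y] [NormedSpace ℝ Y] [CompleteSpace Y]
    (K : Set Y) (e : Y) (F : X → Set Y) (Ω : Set X) (xbar : X)
    (hKcl : IsClosed K) (hKcv : Convex ℝ K)
    (hKcone : ∀ t : ℝ, 0 ≤ t → ∀ y ∈ K, t • y ∈ K)
    (hKpt : K ∩ (-K) = {0})
    (he : e ∈ interior K)
    (hΩne : Ω.Nonempty) (hΩcl : IsClosed Ω)
    (hΩdom : Ω ⊆ interior {x | (F x).Nonempty})
    (hxΩ : xbar ∈ Ω)
    (hFlip : ∃ U ∈ 𝓝 xbar, ∃ ℓ : ℝ, 0 ≤ ℓ ∧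
      ∀ x ∈ U, ∀ x' ∈ U, F x ⊆ F x' + Metric.closedBall (0 : Y) (ℓ * ‖x - x'‖))
    (hW : (wMaxSet (F xbar) K).Nonempty) :
    ∃ V ∈ 𝓝 xbar, ∃ c : ℝ,
      (∀ x ∈ V, fupp K e F xbar x ≠ ⊥ ∧ fupp K e F xbar x ≠ ⊤) ∧
      (∀ x ∈ V, ∀ x' ∈ V,
        |(fupp K e F xbar x).toReal - (fupp K e F xbar x').toReal| ≤ c * ‖x - x'‖) :=
  stmt12_general K e F xbar hKcv hKcone he hFlip hW
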